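/- arXiv:1407.6258 — 3 statements merged into one kernel-verified Lean document; each statement's English description precedes it below -/
import Mathlib

section
/- Let P be a finite ranked poset, and for each m ≥ 0 let f_{2m+1} ∈ ℚ[x₁,…,x_{2m+1}] be obtained from N_P^(m) by the substitution (⋆), i.e. by setting p_i := x_{2i−1} − x_{2i} (1 ≤ i ≤ m), q_i := x_{2i} − x_{2i+1} (1 ≤ i ≤ m) and p_{m+1} := x_{2m+1}. Then (f_{2m+1})_{m≥0} is the unique stable x-family satisfying equation (E_x) such that for every m ≥ 0 one has f_{2m+1}(0,y₁,0,y₂,0,…,0,y_m,0) = (−1)^{|V₀|} · F_P^(m)(y₁,…,y_m), where |V₀| is the number of elements of P of even rank. -/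
open MvPolynomial
open scoped Classical

noncomputable section

/-- The order condition for a function `r : α → Fin N` (labels `0,…,N-1` standing for
`1,…,N`) with respect to a rank function `ht` on the poset `α`. -/
def OrderCond {α : Type} [PartialOrder α] (ht : α → ℕ) {N : ℕ} (r : α → Fin N) : Prop :=
  (∀ x y : α, x ≤ y → r x ≤ r y) ∧ ∀ x y : α, x < y → Odd (ht x) → r x < r y

/-- `ht` is a rank function on the poset `α`: minimal elements have height `0` and
covering relations increase the height by exactly one. -/
def IsRanked {α : Type} [PartialOrder α] (ht : α → ℕ) : Prop :=
  (∀ x : α, IsMin x → ht x = 0) ∧ ∀ x y : α, x ⋖ y → ht y = ht x + 1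

/-- The polynomial `N_P^(m)`, an element of `ℚ[p₁,…,p_{m+1},q₁,…,q_m]`;
the variable `Sum.inl j` is `p_{j+1}` and `Sum.inr j` is `q_{j+1}` (0-indexed). -/
def NP (α : Type) [Fintype α] [PartialOrder α] (ht : α → ℕ) (m : ℕ) :
    MvPolynomial (ℕ ⊕ ℕ) ℚ :=
  ∑ r : α → Fin (m + 1),
    if OrderCond ht r ∧ ∀ v, Odd (ht v) → (r v : ℕ) < m then
      ∏ v : α, if Even (ht v) then X (Sum.inl (r v : ℕ)) else X (Sum.inr (r v : ℕ))
    else 0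

/-- The polynomial `F_P^(N)`, an element of `ℚ[x₁,…,x_N]`; variable `j` is `x_{j+1}`. -/
def FP (α : Type) [Fintype α] [PartialOrder α] (ht : α → ℕ) (N : ℕ) :
    MvPolynomial ℕ ℚ :=
  ∑ r : α → Fin N, if OrderCond ht r then ∏ v : α, X (r v : ℕ) else 0

/-- A stable x-family `(f_{2m+1})_{m ≥ 0}`: `f m` stands for `f_{2m+1} ∈ ℚ[x₁,…,x_{2m+1}]`
(variable `k` is `x_{k+1}`), with `f_{2m+3}(x₁,…,x_{2m+1},0,0) = f_{2m+1}`. -/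
def IsStableX (f : ℕ → MvPolynomial ℕ ℚ) : Prop :=
  (∀ m, (f m).vars ⊆ Finset.range (2 * m + 1)) ∧
  ∀ m, aeval (fun k => if k < 2 * m + 1 then (X k : MvPolynomial ℕ ℚ) else 0) (f (m + 1)) = f m

/-- Equation (E_x): for all (paper) `m ≥ 1` and `1 ≤ i ≤ 2m`, substituting `x_{i+1} := x_i`
in `f_{2m+1}` yields `f_{2m-1}(x₁,…,x_{i-1},x_{i+2},…,x_{2m+1})`.  Here `m, i` are 0-indexed:
`f (m+1)` is `f_{2m+3}` and the Lean variable `i` is the paper variable `i+1`. -/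
def SatisfiesEx (f : ℕ → MvPolynomial ℕ ℚ) : Prop :=
  ∀ m i : ℕ, i < 2 * m + 2 →
    aeval (fun k => if k = i + 1 then (X i : MvPolynomial ℕ ℚ) else X k) (f (m + 1)) =
    aeval (fun k => if k < i then (X k : MvPolynomial ℕ ℚ) else X (k + 2)) (f m)

/-- A stable pq-family `(h_m)_{m ≥ 0}` with `h m ∈ ℚ[p₁,…,p_{m+1},q₁,…,q_m]`
(`Sum.inl j` is `p_{j+1}`, `Sum.inr j` is `q_{j+1}`), such that substituting
`p_{m+2} := 0` and `q_{m+1} := 0` in `h (m+1)` yields `h m`. -/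
def IsStablePQ (h : ℕ → MvPolynomial (ℕ ⊕ ℕ) ℚ) : Prop :=
  (∀ m, (h m).vars ⊆ (Finset.range (m + 1)).image Sum.inl ∪ (Finset.range m).image Sum.inr) ∧
  ∀ m, aeval (Sum.elim
      (fun j => if j = m + 1 then 0 else (X (Sum.inl j) : MvPolynomial (ℕ ⊕ ℕ) ℚ))
      (fun j => if j = m then 0 else X (Sum.inr j))) (h (m + 1)) = h m

/-- Equations (E_pq) for a pq-family; the Lean index `i ≤ m` is the paper index `i+1 ≤ m+1`
and `h (m+1)`, `h m` are the paper `h_m`, `h_{m-1}`.  The first equation sets `q_{i+1} := 0`,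
the second sets `p_{i+1} := 0`. -/
def SatisfiesEpq (h : ℕ → MvPolynomial (ℕ ⊕ ℕ) ℚ) : Prop :=
  ∀ m i : ℕ, i ≤ m →
    (aeval (Sum.elim (fun j => (X (Sum.inl j) : MvPolynomial (ℕ ⊕ ℕ) ℚ))
        (fun j => if j = i then 0 else X (Sum.inr j))) (h (m + 1)) =
      aeval (Sum.elim
        (fun j => if j < i then (X (Sum.inl j) : MvPolynomial (ℕ ⊕ ℕ) ℚ)
          else if j = i then X (Sum.inl i) + X (Sum.inl (i + 1)) else X (Sum.inl (j + 1)))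
        (fun j => if j < i then X (Sum.inr j) else X (Sum.inr (j + 1)))) (h m)) ∧
    (aeval (Sum.elim (fun j => if j = i then 0 else (X (Sum.inl j) : MvPolynomial (ℕ ⊕ ℕ) ℚ))
        (fun j => X (Sum.inr j))) (h (m + 1)) =
      aeval (Sum.elim
        (fun j => if j < i then (X (Sum.inl j) : MvPolynomial (ℕ ⊕ ℕ) ℚ)
          else X (Sum.inl (j + 1)))
        (fun j => if j + 1 < i then X (Sum.inr j)
          else if j + 1 = i then X (Sum.inr j) + X (Sum.inr (j + 1))
          else X (Sum.inr (j + 1)))) (h m))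

/-- The inverse substitution of (⋆): the x-variable of (0-indexed) Lean index `k`
(paper `x_{k+1}`) expressed in the `p`/`q` variables:
`x_{2i+1} = q_{i+1}+⋯+q_m+p_{i+1}+⋯+p_{m+1}` and `x_{2i} = q_i+⋯+q_m+p_{i+1}+⋯+p_{m+1}`. -/
def xToPQ (m k : ℕ) : MvPolynomial (ℕ ⊕ ℕ) ℚ :=
  if k % 2 = 0 then
    (∑ j ∈ Finset.Ico (k / 2) m, X (Sum.inr j)) + ∑ j ∈ Finset.Ico (k / 2) (m + 1), X (Sum.inl j)
  else
    (∑ j ∈ Finset.Ico (k / 2) m, X (Sum.inr j)) +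
      ∑ j ∈ Finset.Ico (k / 2 + 1) (m + 1), X (Sum.inl j)

/-- The substitution (⋆): `p_i := x_{2i-1} - x_{2i}` (`1 ≤ i ≤ m`),
`q_i := x_{2i} - x_{2i+1}` (`1 ≤ i ≤ m`), `p_{m+1} := x_{2m+1}` (all 0-indexed in Lean). -/
def pqToX (m : ℕ) : ℕ ⊕ ℕ → MvPolynomial ℕ ℚ :=
  Sum.elim (fun j => if j = m then X (2 * m) else X (2 * j) - X (2 * j + 1))
    (fun j => X (2 * j + 1) - X (2 * j + 2))

/-- The substitution sending every odd-indexed (paper) variable `x_{2i+1}` to `0`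
and `x_{2i}` to `y_i` (Lean variable `i-1`). -/
def oddZero : ℕ → MvPolynomial ℕ ℚ := fun k => if k % 2 = 0 then 0 else X (k / 2)

/-- A quasi-symmetric stable family `(g_m)_{m≥0}` with `g m ∈ ℚ[y₁,…,y_m]`
(variable `k` is `y_{k+1}`): `g_{m+1}(y₁,…,y_m,0) = g_m`, and the coefficient of
`y_{a₁}^{c₁}⋯y_{a_r}^{c_r}` (for `a₁ < ⋯ < a_r ≤ m`, `c_j > 0`) equals the coefficient
of `y₁^{c₁}⋯y_r^{c_r}`. -/
def IsQSymStable (g : ℕ → MvPolynomial ℕ ℚ) : Prop :=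
  (∀ m, (g m).vars ⊆ Finset.range m) ∧
  (∀ m, aeval (fun k => if k = m then 0 else (X k : MvPolynomial ℕ ℚ)) (g (m + 1)) = g m) ∧
  ∀ (m r : ℕ) (a c : Fin r → ℕ), StrictMono a → (∀ j, a j < m) → (∀ j, 0 < c j) →
    coeff (∑ j, Finsupp.single (a j) (c j)) (g m) =
    coeff (∑ j : Fin r, Finsupp.single (j : ℕ) (c j)) (g m)

/-!
Write `f_m` for the image of `N_P^(m)` under (⋆). Each substitution in (E_x) identifies two
adjacent variables and thereby kills one variable of `N_P^(m+1)`: `p₁` if `x₂ = x₁`,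
`q_{c+1}` if `x_{2c+3} = x_{2c+2}`, `p_{c+2}` if `x_{2c+4} = x_{2c+3}`. Only labellings avoiding
the killed value on elements of the matching parity survive, and on those, lowering all labels
by one (resp. merging the labels `c+1, c+2`) preserves the order condition because `P` is
ranked. The merged label carries the weights `p_{c+1} + p_{c+2}` and `q_{c+1} + q_{c+2}`, which
is what (⋆) at level `m`, followed by the renaming on the right of (E_x), produces. Stability
is the same merge at the top label, and at `(0,y₁,0,…,y_m,0)` the substitution (⋆) reads
`p_i = -y_i`, `q_i = y_i`, `p_{m+1} = 0`.

For uniqueness, the difference `d` of two solutions satisfies (E_x) and vanishes at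
`(0,y₁,0,…)`; induct on the degree of a monomial `e` of `d_m` in `x₁, x₃, …`. In degree zero
the coefficient survives that evaluation, so it vanishes. Otherwise `x_{2c+1}` occurs in `e`.
(E_x) identifying `x_{2c+3}` with `x_{2c+2}` makes the coefficient of `e` in `d_m` a coefficient
of `d_{m+1}`, and (E_x) identifying `x_{2c+2}` with `x_{2c+1}`, whose right-hand side is free of
`x_{2c+1}`, expresses the latter through coefficients of smaller degree in `x₁, x₃, …`.
-/

namespace Finset

variable {ι β γ R : Type*} [Fintype ι] [DecidableEq ι] [DecidableEq γ] [CommSemiring R]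

theorem filter_piFinset_comp_eq (s : Finset β) (κ : β → γ) (ρ' : ι → γ) :
    {ρ ∈ Fintype.piFinset fun _ : ι => s | κ ∘ ρ = ρ'} =
      Fintype.piFinset fun i => {b ∈ s | κ b = ρ' i} := by
  ext ρ
  simp only [mem_filter, Fintype.mem_piFinset, funext_iff, Function.comp_apply, forall_and]

/-- Grouping the `ρ` by `κ ∘ ρ`, the lifts of a fixed `ρ'` form a box, over which the sum of
products factorises into the fibre sums of `hF`. -/
theorem sum_piFinset_ite_prod_eq_of_collapse {s : Finset β} {t : Finset γ} (κ : β → γ)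
    (hκ : ∀ b ∈ s, κ b ∈ t) (C : (ι → β) → Prop) (C' : (ι → γ) → Prop)
    (F : ι → β → R) (F' : ι → γ → R)
    (hC : ∀ ρ ∈ Fintype.piFinset fun _ => s, (∀ i, F i (ρ i) ≠ 0) → (C ρ ↔ C' (κ ∘ ρ)))
    (hF : ∀ ρ' ∈ Fintype.piFinset fun _ => t, C' ρ' →
      ∀ i, ∑ b ∈ s with κ b = ρ' i, F i b = F' i (ρ' i)) :
    ∑ ρ ∈ Fintype.piFinset (fun _ => s), (if C ρ then ∏ i, F i (ρ i) else 0) =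
      ∑ ρ' ∈ Fintype.piFinset (fun _ => t), (if C' ρ' then ∏ i, F' i (ρ' i) else 0) := by
  have hmaps : ∀ ρ ∈ Fintype.piFinset fun _ : ι => s, κ ∘ ρ ∈ Fintype.piFinset fun _ => t :=
    fun ρ hρ => Fintype.mem_piFinset.2 fun i => hκ _ (Fintype.mem_piFinset.1 hρ i)
  rw [← sum_fiberwise_of_maps_to hmaps]
  refine sum_congr rfl fun ρ' hρ' => ?_
  have hlift : ∀ ρ ∈ {ρ ∈ Fintype.piFinset fun _ : ι => s | κ ∘ ρ = ρ'},
      (if C ρ then ∏ i, F i (ρ i) else 0) = if C' ρ' then ∏ i, F i (ρ i) else 0 := by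
    intro ρ hρ
    obtain ⟨hρs, rfl⟩ := mem_filter.1 hρ
    by_cases hF0 : ∀ i, F i (ρ i) ≠ 0
    · simp only [hC ρ hρs hF0]
    · obtain ⟨i, hi⟩ := not_forall_not.1 hF0
      simp [prod_eq_zero (f := fun i => F i (ρ i)) (mem_univ i) hi]
  rw [sum_congr rfl hlift, filter_piFinset_comp_eq]
  split_ifs with hC'
  · rw [← prod_univ_sum]
    exact prod_congr rfl fun i _ => hF ρ' hρ' hC' i
  · exact sum_const_zero

end Finset

theorem Fintype.sum_piFinset_range_eq_sum_fin {ι M : Type*} [Fintype ι] [DecidableEq ι]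
    [AddCommMonoid M] (N : ℕ) (T : (ι → ℕ) → M) :
    ∑ ρ ∈ Fintype.piFinset (fun _ : ι => Finset.range N), T ρ =
      ∑ r : ι → Fin N, T (fun i => r i) := by
  refine Finset.sum_bij' (fun ρ hρ i => ⟨ρ i, Finset.mem_range.1 (Fintype.mem_piFinset.1 hρ i)⟩)
    (fun r _ i => r i) (fun _ _ => Finset.mem_univ _) (fun r _ => ?_) (fun _ _ => rfl)
    (fun _ _ => rfl) (fun _ _ => rfl)
  simp [Fintype.mem_piFinset]

namespace MvPolynomial

variable {σ τ R : Type*} [CommSemiring R]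

theorem coeff_rename_eq_sum [DecidableEq τ] (f : σ → τ) (p : MvPolynomial σ R) (ν : τ →₀ ℕ) :
    coeff ν (rename f p) = ∑ μ ∈ p.support with μ.mapDomain f = ν, coeff μ p := by
  conv_lhs => rw [p.as_sum]
  simp only [map_sum, rename_monomial, coeff_sum, coeff_monomial, Finset.sum_filter]

theorem coeff_rename_eq_of_fiber (f : σ → σ) (p : MvPolynomial σ R) {ν : σ →₀ ℕ}
    (hν : ν.mapDomain f = ν) (hfiber : ∀ μ ≠ ν, μ.mapDomain f = ν → coeff μ p = 0) :
    coeff ν (rename f p) = coeff ν p := by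
  classical
  rw [coeff_rename_eq_sum,
    Finset.sum_eq_single ν fun μ hμ hne => hfiber μ hne (Finset.mem_filter.1 hμ).2]
  intro hν'
  exact notMem_support_iff.1 fun h => hν' (Finset.mem_filter.2 ⟨h, hν⟩)

end MvPolynomial

theorem Finsupp.weight_mapDomain {σ τ M : Type*} [AddCommMonoid M] (w : τ → M) (f : σ → τ)
    (e : σ →₀ ℕ) : Finsupp.weight w (e.mapDomain f) = Finsupp.weight (w ∘ f) e := by
  induction e using Finsupp.induction_linear with
  | zero => simp
  | add a b ha hb => rw [Finsupp.mapDomain_add, map_add, map_add, ha, hb]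
  | single k n => simp [Finsupp.mapDomain_single, Finsupp.weight_single]

section Labelling

variable {α : Type} [PartialOrder α] {ht : α → ℕ} {ρ : α → ℕ}

def LabelOrder (ht : α → ℕ) (ρ : α → ℕ) : Prop :=
  (∀ x y : α, x ≤ y → ρ x ≤ ρ y) ∧ ∀ x y : α, x < y → Odd (ht x) → ρ x < ρ y

/-- The condition on the labellings summed in `NP`, for labels in `ℕ`; the bound `ρ v ≤ m` on
even elements is imposed by the range of summation in `labelSum`. -/
def Admissible (ht : α → ℕ) (m : ℕ) (ρ : α → ℕ) : Prop :=
  LabelOrder ht ρ ∧ ∀ v, Odd (ht v) → ρ v < m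

namespace IsRanked

variable [WellFoundedLT α]

theorem lt_of_even (hrk : IsRanked ht) (hρ : LabelOrder ht ρ) {x y : α} (hxy : x < y)
    (hx : Even (ht x)) (hy : Even (ht y)) : ρ x < ρ y := by
  obtain ⟨z, hxz, hzy⟩ := exists_covBy_le_of_lt hxy
  have hz : Odd (ht z) := by rw [hrk.2 x z hxz]; exact hx.add_one
  have hzy' : z < y := hzy.lt_of_ne fun h => (Nat.not_even_iff_odd.2 hz) (h ▸ hy)
  exact (hρ.1 x z hxz.le).trans_lt (hρ.2 z y hzy' hz)

theorem exists_even_between (hrk : IsRanked ht) (hρ : LabelOrder ht ρ) {x y : α} (hxy : x < y)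
    (hx : Odd (ht x)) : ∃ z, Even (ht z) ∧ ρ x < ρ z ∧ ρ z ≤ ρ y := by
  obtain ⟨z, hxz, hzy⟩ := exists_covBy_le_of_lt hxy
  exact ⟨z, by rw [hrk.2 x z hxz]; exact hx.add_one, hρ.2 x z hxz.lt hx, hρ.1 z y hzy⟩

theorem exists_even_eq_zero (hrk : IsRanked ht) (hρ : LabelOrder ht ρ) {v : α} (hv : ρ v = 0) :
    ∃ u, Even (ht u) ∧ ρ u = 0 := by
  obtain ⟨u, huv, hu⟩ := exists_minimal_le_of_wellFoundedLT (fun _ => True) v trivial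
  refine ⟨u, by rw [hrk.1 u (minimal_true.1 hu)]; exact ⟨0, rfl⟩, ?_⟩
  exact Nat.eq_zero_of_le_zero (hv ▸ hρ.1 u v huv)

end IsRanked

def mergeLabel (c n : ℕ) : ℕ := if n ≤ c then n else n - 1

theorem Admissible.comp_mergeLabel [WellFoundedLT α] (hrk : IsRanked ht) {c m : ℕ}
    (hρ : Admissible ht (m + 1) ρ)
    (hlive : (c ≤ m ∧ ∀ v, Odd (ht v) → ρ v ≠ c) ∨ (c < m ∧ ∀ v, Even (ht v) → ρ v ≠ c + 1)) :
    Admissible ht m (mergeLabel c ∘ ρ) := by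
  have hstrict : ∀ x y, x < y → Odd (ht x) → ¬(ρ x = c ∧ ρ y = c + 1) := by
    rintro x y hxy hx ⟨hxc, hyc⟩
    rcases hlive with ⟨-, hodd⟩ | ⟨-, heven⟩
    · exact hodd x hx hxc
    · obtain ⟨z, hz, hxz, hzy⟩ := hrk.exists_even_between hρ.1 hxy hx
      exact heven z hz (by have := hρ.1.1 x y hxy.le; omega)
  refine ⟨⟨fun x y hxy => ?_, fun x y hxy hx => ?_⟩, fun v hv => ?_⟩ <;>
    simp only [Function.comp_apply, mergeLabel]
  · have := hρ.1.1 x y hxy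
    split_ifs <;> omega
  · have := hρ.1.2 x y hxy hx
    have := hstrict x y hxy hx
    split_ifs <;> omega
  · have := hρ.2 v hv
    rcases hlive with ⟨hcm, hodd⟩ | ⟨hcm, -⟩
    · have := hodd v hv
      split_ifs <;> omega
    · split_ifs <;> omega

theorem Admissible.of_comp_mergeLabel [WellFoundedLT α] (hrk : IsRanked ht) {c m : ℕ}
    (hρ : Admissible ht m (mergeLabel c ∘ ρ))
    (hlive : (∀ v, Odd (ht v) → ρ v ≠ c) ∨ (∀ v, Even (ht v) → ρ v ≠ c + 1)) :
    Admissible ht (m + 1) ρ := by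
  obtain ⟨⟨hmono, hstrict⟩, hbound⟩ := hρ
  simp only [Function.comp_apply, mergeLabel] at hmono hstrict hbound
  refine ⟨⟨fun x y hxy => ?_, fun x y hxy hx => ?_⟩, fun v hv => ?_⟩
  · rcases hxy.lt_or_eq with hxy | rfl
    · have hle := hmono x y hxy.le
      by_contra hyx
      have hx : ρ x = c + 1 ∧ ρ y = c := by split_ifs at hle <;> omega
      rcases Nat.even_or_odd (ht x) with hxe | hxo
      · rcases Nat.even_or_odd (ht y) with hye | hyo
        · have := hrk.lt_of_even (ρ := mergeLabel c ∘ ρ) ⟨hmono, hstrict⟩ hxy hxe hye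
          simp only [Function.comp_apply, mergeLabel] at this
          split_ifs at this <;> omega
        · rcases hlive with hodd | heven
          · exact hodd y hyo hx.2
          · exact heven x hxe hx.1
      · have := hstrict x y hxy hxo
        split_ifs at this <;> omega
    · exact le_rfl
  · have := hstrict x y hxy hx
    split_ifs at this <;> omega
  · have := hbound v hv
    split_ifs at this <;> omega

theorem admissible_succ_iff_sub_one {m : ℕ} {ρ : α → ℕ} (hρ : ∀ v, 1 ≤ ρ v) :
    Admissible ht (m + 1) ρ ↔ Admissible ht m (fun v => ρ v - 1) := by
  simp only [Admissible, LabelOrder]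
  refine ⟨fun ⟨⟨hmono, hstrict⟩, hbound⟩ => ⟨⟨fun x y hxy => ?_, fun x y hxy hx => ?_⟩,
    fun v hv => ?_⟩, fun ⟨⟨hmono, hstrict⟩, hbound⟩ => ⟨⟨fun x y hxy => ?_, fun x y hxy hx => ?_⟩,
    fun v hv => ?_⟩⟩
  all_goals first
    | (have := hmono x y hxy; have := hρ x; have := hρ y; omega)
    | (have := hstrict x y hxy hx; have := hρ x; have := hρ y; omega)
    | (have := hbound v hv; have := hρ v; omega)

end Labelling

section LabelSum

variable {α : Type} [Fintype α] [PartialOrder α] {ht : α → ℕ} {R : Type*} [CommSemiring R]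

def labelWeight (ht : α → ℕ) (P Q : ℕ → R) (v : α) (n : ℕ) : R :=
  if Even (ht v) then P n else Q n

def labelSum (ht : α → ℕ) (m : ℕ) (P Q : ℕ → R) : R :=
  ∑ ρ ∈ Fintype.piFinset (fun _ : α => Finset.range (m + 1)),
    if Admissible ht m ρ then ∏ v, labelWeight ht P Q v (ρ v) else 0

theorem aeval_NP {S : Type*} [CommSemiring S] [Algebra ℚ S] (g : ℕ ⊕ ℕ → S) (m : ℕ) :
    aeval g (NP α ht m) = labelSum ht m (fun j => g (Sum.inl j)) (fun j => g (Sum.inr j)) := by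
  rw [labelSum, Fintype.sum_piFinset_range_eq_sum_fin, NP, map_sum]
  refine Finset.sum_congr rfl fun r _ => ?_
  rw [apply_ite (aeval g), map_prod, map_zero]
  simp only [apply_ite (aeval g), aeval_X, labelWeight]
  exact if_congr Iff.rfl rfl rfl

theorem map_labelSum {S F : Type*} [CommSemiring S] [FunLike F R S] [RingHomClass F R S] (φ : F)
    (m : ℕ) (P Q : ℕ → R) :
    φ (labelSum ht m P Q) = labelSum ht m (fun j => φ (P j)) (fun j => φ (Q j)) := by
  simp only [labelSum, map_sum, apply_ite φ, map_prod, map_zero, labelWeight]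

theorem labelSum_congr {m : ℕ} {P Q P' Q' : ℕ → R} (hP : ∀ j ≤ m, P j = P' j)
    (hQ : ∀ j < m, Q j = Q' j) : labelSum ht m P Q = labelSum ht m P' Q' := by
  refine Finset.sum_congr rfl fun ρ hρ => ?_
  split_ifs with hadm
  · refine Finset.prod_congr rfl fun v _ => ?_
    have hv := Finset.mem_range.1 (Fintype.mem_piFinset.1 hρ v)
    simp only [labelWeight]
    split_ifs with hev
    · exact hP _ (by omega)
    · exact hQ _ (hadm.2 v (Nat.not_even_iff_odd.1 hev))
  · rfl

theorem labelSum_mem {S : Type*} [SetLike S R] [SubsemiringClass S R] (s : S) {m : ℕ}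
    {P Q : ℕ → R} (hP : ∀ j ≤ m, P j ∈ s) (hQ : ∀ j < m, Q j ∈ s) : labelSum ht m P Q ∈ s := by
  refine sum_mem fun ρ hρ => ?_
  split_ifs with hadm
  · refine prod_mem fun v _ => ?_
    have hv := Finset.mem_range.1 (Fintype.mem_piFinset.1 hρ v)
    simp only [labelWeight]
    split_ifs with hev
    · exact hP _ (by omega)
    · exact hQ _ (hadm.2 v (Nat.not_even_iff_odd.1 hev))
  · exact zero_mem s

end LabelSum

section Merge

variable {α : Type} [Fintype α] [PartialOrder α] {ht : α → ℕ} {R : Type*} [CommSemiring R]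

def mergeAt (c : ℕ) (P : ℕ → R) (j : ℕ) : R :=
  if j < c then P j else if j = c then P c + P (c + 1) else P (j + 1)

theorem sum_filter_mergeLabel (f : ℕ → R) {c m j : ℕ} (hc : c ≤ m) (hj : j ≤ m) :
    ∑ n ∈ Finset.range (m + 2) with mergeLabel c n = j, f n = mergeAt c f j := by
  have hmem : ∀ n, n ∈ {n ∈ Finset.range (m + 2) | mergeLabel c n = j} ↔
      n < m + 2 ∧ (if n ≤ c then n else n - 1) = j := fun n => by
    rw [Finset.mem_filter, Finset.mem_range, mergeLabel]
  unfold mergeAt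
  split_ifs with hjc hjc'
  · refine Finset.sum_eq_single_of_mem j ((hmem j).2 (by split_ifs <;> omega)) fun n hn hnj => ?_
    rw [hmem] at hn
    split_ifs at hn <;> omega
  · subst hjc'
    rw [← Finset.sum_pair (show j ≠ j + 1 by omega)]
    congr 1
    ext n
    rw [hmem, Finset.mem_insert, Finset.mem_singleton]
    split_ifs <;> omega
  · refine Finset.sum_eq_single_of_mem (j + 1) ((hmem _).2 (by split_ifs <;> omega))
      fun n hn hnj => ?_
    rw [hmem] at hn
    split_ifs at hn <;> omega

theorem labelSum_succ_eq_of_merge (hrk : IsRanked ht) {c m : ℕ} {P Q P' Q' : ℕ → R}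
    (hdead : (c ≤ m ∧ Q c = 0) ∨ (c < m ∧ P (c + 1) = 0))
    (hP : ∀ j ≤ m, P' j = mergeAt c P j) (hQ : ∀ j < m, Q' j = mergeAt c Q j) :
    labelSum ht (m + 1) P Q = labelSum ht m P' Q' := by
  have hcm : c ≤ m := by omega
  have hlive : ∀ ρ : α → ℕ, (∀ v, labelWeight ht P Q v (ρ v) ≠ 0) →
      (c ≤ m ∧ ∀ v, Odd (ht v) → ρ v ≠ c) ∨ (c < m ∧ ∀ v, Even (ht v) → ρ v ≠ c + 1) := by
    intro ρ hρ
    refine hdead.imp (fun ⟨hc, hQc⟩ => ⟨hc, fun v hv hvc => hρ v ?_⟩)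
      (fun ⟨hc, hPc⟩ => ⟨hc, fun v hv hvc => hρ v ?_⟩)
    · rw [labelWeight, if_neg (Nat.not_even_iff_odd.2 hv), hvc, hQc]
    · rw [labelWeight, if_pos hv, hvc, hPc]
  refine Finset.sum_piFinset_ite_prod_eq_of_collapse (mergeLabel c) (fun b hb => ?_) _ _ _ _
    (fun ρ _ hρ => ⟨fun h => h.comp_mergeLabel hrk (hlive ρ hρ),
      fun h => h.of_comp_mergeLabel hrk ((hlive ρ hρ).imp And.right And.right)⟩)
    (fun ρ' hρ' hadm v => ?_)
  · simp only [Finset.mem_range, mergeLabel] at hb ⊢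
    split_ifs <;> omega
  have hv := Finset.mem_range.1 (Fintype.mem_piFinset.1 hρ' v)
  by_cases hev : Even (ht v)
  · simp only [labelWeight, hev, if_true]
    exact (sum_filter_mergeLabel P hcm (by omega)).trans (hP _ (by omega)).symm
  · have hvm := hadm.2 v (Nat.not_even_iff_odd.1 hev)
    simp only [labelWeight, hev, if_false]
    exact (sum_filter_mergeLabel Q hcm (by omega)).trans (hQ _ hvm).symm

end Merge

section Shift

variable {α : Type} [Fintype α] [PartialOrder α] {ht : α → ℕ} {R : Type*} [CommSemiring R]

theorem labelSum_succ_eq_of_shift (hrk : IsRanked ht) {m : ℕ} {P Q P' Q' : ℕ → R}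
    (hP0 : P 0 = 0) (hP : ∀ j ≤ m, P' j = P (j + 1)) (hQ : ∀ j < m, Q' j = Q (j + 1)) :
    labelSum ht (m + 1) P Q = labelSum ht m P' Q' := by
  have hsub : Fintype.piFinset (fun _ : α => Finset.Ico 1 (m + 2)) ⊆
      Fintype.piFinset (fun _ => Finset.range (m + 2)) :=
    Fintype.piFinset_subset _ _ fun _ b hb => by
      simp only [Finset.mem_Ico, Finset.mem_range] at hb ⊢
      omega
  rw [labelSum, ← Finset.sum_subset hsub fun ρ hρ hρ' => ?_]
  · refine Finset.sum_piFinset_ite_prod_eq_of_collapse (· - 1) (fun b hb => ?_) _ _ _ _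
      (fun ρ hρ _ => admissible_succ_iff_sub_one fun v => ?_) (fun ρ' hρ' hadm v => ?_)
    · simp only [Finset.mem_Ico, Finset.mem_range] at hb ⊢
      omega
    · exact (Finset.mem_Ico.1 (Fintype.mem_piFinset.1 hρ v)).1
    · have hv := Finset.mem_range.1 (Fintype.mem_piFinset.1 hρ' v)
      rw [Finset.sum_eq_single_of_mem (ρ' v + 1) (by simp; omega) fun b hb hb' => by
        simp only [Finset.mem_filter, Finset.mem_Ico] at hb; omega]
      by_cases hev : Even (ht v)
      · simp only [labelWeight, hev, if_true]
        rw [hP _ (by omega)]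
      · simp only [labelWeight, hev, if_false]
        rw [hQ _ (hadm.2 v (Nat.not_even_iff_odd.1 hev))]
  · obtain ⟨v, hv⟩ : ∃ v, ρ v = 0 := by
      simp only [Fintype.mem_piFinset, Finset.mem_Ico, Finset.mem_range, not_forall] at hρ hρ'
      obtain ⟨v, hv⟩ := hρ'
      exact ⟨v, by have := hρ v; omega⟩
    refine ite_eq_right_iff.2 fun hadm => ?_
    obtain ⟨u, hu, hu0⟩ := hrk.exists_even_eq_zero hadm.1 hv
    exact Finset.prod_eq_zero (Finset.mem_univ u) (by rw [labelWeight, if_pos hu, hu0, hP0])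

theorem labelSum_eq_sum_labelOrder {m : ℕ} {P Q : ℕ → R} (hPm : P m = 0) :
    labelSum ht m P Q = ∑ ρ ∈ Fintype.piFinset (fun _ : α => Finset.range m),
      if LabelOrder ht ρ then ∏ v, labelWeight ht P Q v (ρ v) else 0 := by
  have hsub : Fintype.piFinset (fun _ : α => Finset.range m) ⊆
      Fintype.piFinset (fun _ => Finset.range (m + 1)) :=
    Fintype.piFinset_subset _ _ fun _ => Finset.range_subset_range.2 m.le_succ
  rw [labelSum, ← Finset.sum_subset hsub fun ρ hρ hρ' => ?_]
  · refine Finset.sum_congr rfl fun ρ hρ => if_congr ⟨And.left, fun h => ⟨h, fun v _ => ?_⟩⟩ rfl rfl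
    exact Finset.mem_range.1 (Fintype.mem_piFinset.1 hρ v)
  · obtain ⟨v, hv⟩ : ∃ v, ρ v = m := by
      simp only [Fintype.mem_piFinset, Finset.mem_range, not_forall] at hρ hρ'
      obtain ⟨v, hv⟩ := hρ'
      exact ⟨v, by have := hρ v; omega⟩
    refine ite_eq_right_iff.2 fun hadm => Finset.prod_eq_zero (Finset.mem_univ v) ?_
    by_cases hev : Even (ht v)
    · rw [labelWeight, if_pos hev, hv, hPm]
    · exact absurd (hadm.2 v (Nat.not_even_iff_odd.1 hev)) (by omega)

end Shift

section XFamily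

variable (α : Type) [Fintype α] [PartialOrder α] {ht : α → ℕ}

def xFamily (ht : α → ℕ) (m : ℕ) : MvPolynomial ℕ ℚ := aeval (pqToX m) (NP α ht m)

theorem aeval_xFamily {S : Type*} [CommSemiring S] [Algebra ℚ S] (g : ℕ → S) (m : ℕ) :
    aeval g (xFamily α ht m) = labelSum ht m (fun j => aeval g (pqToX m (Sum.inl j)))
      (fun j => aeval g (pqToX m (Sum.inr j))) := by
  rw [xFamily, aeval_NP, map_labelSum]

theorem vars_xFamily_subset (m : ℕ) : (xFamily α ht m).vars ⊆ Finset.range (2 * m + 1) := by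
  have hX : ∀ k < 2 * m + 1, (X k : MvPolynomial ℕ ℚ) ∈ supported ℚ ↑(Finset.range (2 * m + 1)) :=
    fun k hk => X_mem_supported.2 (Finset.mem_coe.2 (Finset.mem_range.2 hk))
  have hmem : xFamily α ht m ∈ supported ℚ ↑(Finset.range (2 * m + 1)) := by
    rw [xFamily, aeval_NP]
    refine labelSum_mem _ (fun j hj => ?_) fun j hj => ?_ <;>
      simp only [pqToX, Sum.elim_inl, Sum.elim_inr]
    · split_ifs
      · exact hX _ (by omega)
      · exact sub_mem (hX _ (by omega)) (hX _ (by omega))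
    · exact sub_mem (hX _ (by omega)) (hX _ (by omega))
  exact Finset.coe_subset.1 (mem_supported.1 hmem)

theorem aeval_truncate_xFamily (hrk : IsRanked ht) (m : ℕ) :
    aeval (fun k => if k < 2 * m + 1 then (X k : MvPolynomial ℕ ℚ) else 0) (xFamily α ht (m + 1)) =
      xFamily α ht m := by
  rw [aeval_xFamily, xFamily, aeval_NP]
  refine labelSum_succ_eq_of_merge hrk (c := m) (Or.inl ⟨le_rfl, ?_⟩) (fun j hj => ?_)
    fun j hj => ?_
  all_goals
    simp only [mergeAt, pqToX, Sum.elim_inl, Sum.elim_inr]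
    (try split_ifs) <;> simp only [map_sub, aeval_X] <;> (try split_ifs) <;>
      first | omega | contradiction | (subst_vars; ring_nf)

theorem satisfiesEx_xFamily (hrk : IsRanked ht) : SatisfiesEx (xFamily α ht) := by
  intro m i hi
  rw [aeval_xFamily, aeval_xFamily]
  obtain ⟨c, rfl | rfl⟩ := Nat.even_or_odd' i
  · cases c with
    | zero =>
      refine labelSum_succ_eq_of_shift hrk ?_ (fun j hj => ?_) fun j hj => ?_ <;>
        simp only [pqToX, Sum.elim_inl, Sum.elim_inr] <;> (try split_ifs) <;>
        simp only [map_sub, aeval_X] <;> (try split_ifs) <;>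
        first | omega | contradiction | (subst_vars; ring_nf)
    | succ c =>
      refine labelSum_succ_eq_of_merge hrk (c := c) (Or.inr ⟨by omega, ?_⟩) (fun j hj => ?_)
        fun j hj => ?_ <;>
        simp only [mergeAt, pqToX, Sum.elim_inl, Sum.elim_inr] <;> (try split_ifs) <;>
        simp only [map_sub, aeval_X] <;> (try split_ifs) <;>
        first | omega | contradiction | (subst_vars; ring_nf)
  · refine labelSum_succ_eq_of_merge hrk (c := c) (Or.inl ⟨by omega, ?_⟩) (fun j hj => ?_)
      fun j hj => ?_ <;>
      simp only [mergeAt, pqToX, Sum.elim_inl, Sum.elim_inr] <;> (try split_ifs) <;>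
      simp only [map_sub, aeval_X] <;> (try split_ifs) <;>
      first | omega | contradiction | (subst_vars; ring_nf)

theorem FP_eq_sum_labelOrder (m : ℕ) :
    FP α ht m = ∑ ρ ∈ Fintype.piFinset (fun _ : α => Finset.range m),
      if LabelOrder ht ρ then ∏ v, (X (ρ v) : MvPolynomial ℕ ℚ) else 0 := by
  rw [Fintype.sum_piFinset_range_eq_sum_fin, FP]
  exact Finset.sum_congr rfl fun r _ => if_congr Iff.rfl rfl rfl

theorem aeval_oddZero_xFamily (m : ℕ) :
    aeval oddZero (xFamily α ht m) =
      ((-1 : ℚ) ^ (Finset.univ.filter (fun v : α => Even (ht v))).card) • FP α ht m := by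
  have hP : ∀ j ≤ m, aeval oddZero (pqToX m (Sum.inl j)) = if j = m then 0 else -X j := by
    intro j hj
    simp only [pqToX, Sum.elim_inl]
    split_ifs <;> simp only [map_sub, aeval_X, oddZero] <;> split_ifs <;>
      first | omega | rfl | (rw [show (2 * j + 1) / 2 = j by omega]; ring)
  have hQ : ∀ j < m, aeval oddZero (pqToX m (Sum.inr j)) = X j := by
    intro j hj
    simp only [pqToX, Sum.elim_inr, map_sub, aeval_X, oddZero]
    split_ifs <;> first | omega | (rw [show (2 * j + 1) / 2 = j by omega]; ring)
  rw [aeval_xFamily, labelSum_congr hP hQ,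
    labelSum_eq_sum_labelOrder (P := fun j => if j = m then 0 else -X j) (if_pos rfl),
    FP_eq_sum_labelOrder, Finset.smul_sum]
  refine Finset.sum_congr rfl fun ρ hρ => ?_
  split_ifs
  · have hsign : ∀ v, labelWeight ht (fun j => if j = m then 0 else -X j) X v (ρ v) =
        (if Even (ht v) then -1 else 1) * (X (ρ v) : MvPolynomial ℕ ℚ) := fun v => by
      have := Finset.mem_range.1 (Fintype.mem_piFinset.1 hρ v)
      simp only [labelWeight, if_neg this.ne]
      split_ifs <;> ring
    rw [Finset.prod_congr rfl fun v _ => hsign v, Finset.prod_mul_distrib, Finset.prod_ite,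
      Finset.prod_const, Finset.prod_const_one, mul_one, smul_eq_C_mul, map_pow, map_neg, map_one]
  · rw [smul_zero]

end XFamily

section Uniqueness

open Finsupp

def identifyNext (i k : ℕ) : ℕ := if k = i + 1 then i else k

def skipTwo (i k : ℕ) : ℕ := if k < i then k else k + 2

theorem skipTwo_injective (i : ℕ) : Function.Injective (skipTwo i) := by
  intro a b h
  simp only [skipTwo] at h
  split_ifs at h <;> omega

theorem SatisfiesEx.rename_eq {f : ℕ → MvPolynomial ℕ ℚ} (hf : SatisfiesEx f) {m i : ℕ}
    (hi : i < 2 * m + 2) : rename (identifyNext i) (f (m + 1)) = rename (skipTwo i) (f m) := by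
  convert hf m i hi using 2 <;> refine algHom_ext fun k => ?_ <;>
    simp only [rename_X, aeval_X, identifyNext, skipTwo] <;> split_ifs <;> rfl

theorem SatisfiesEx.sub {f g : ℕ → MvPolynomial ℕ ℚ} (hf : SatisfiesEx f) (hg : SatisfiesEx g) :
    SatisfiesEx (f - g) := fun m i hi => by
  simp only [Pi.sub_apply, map_sub, hf m i hi, hg m i hi]

/-- The degree in `x₁, x₃, x₅, …`, i.e. in the variables of even index in Lean. -/
def evenWeight : (ℕ →₀ ℕ) →+ ℕ := weight fun k => if Even k then 1 else 0

theorem evenWeight_mapDomain_skipTwo (i : ℕ) (e : ℕ →₀ ℕ) :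
    evenWeight (e.mapDomain (skipTwo i)) = evenWeight e := by
  rw [evenWeight, weight_mapDomain]
  congr 2
  funext k
  by_cases hk : k < i <;> simp [skipTwo, hk, Nat.even_add]

theorem mapDomain_identifyNext (i : ℕ) (μ : ℕ →₀ ℕ) :
    μ.mapDomain (identifyNext i) = μ.erase (i + 1) + single i (μ (i + 1)) := by
  conv_lhs => rw [← erase_add_single (i + 1) μ]
  rw [mapDomain_add, mapDomain_single, identifyNext, if_pos rfl,
    mapDomain_congr (g := id) fun k hk => ?_, mapDomain_id]
  have hk' : k ≠ i + 1 := by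
    rintro rfl
    simp at hk
  rw [identifyNext, if_neg hk', id]

theorem eq_of_mapDomain_identifyNext_eq {i : ℕ} {μ ν : ℕ →₀ ℕ}
    (h : μ.mapDomain (identifyNext i) = ν) (hi : ν i = 0) : μ = ν := by
  rw [mapDomain_identifyNext] at h
  subst h
  obtain ⟨-, hμ⟩ : μ i = 0 ∧ μ (i + 1) = 0 := by simpa using hi
  rw [hμ, single_zero, add_zero, erase_of_notMem_support (by simpa using hμ)]

theorem evenWeight_lt_of_mapDomain_identifyNext_eq {i : ℕ} (hi : Even i) {μ ν : ℕ →₀ ℕ}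
    (h : μ.mapDomain (identifyNext i) = ν) (hne : μ ≠ ν) : evenWeight μ < evenWeight ν := by
  rw [mapDomain_identifyNext] at h
  subst h
  have hμ : μ (i + 1) ≠ 0 := fun h0 => hne (by
    rw [h0, single_zero, add_zero, erase_of_notMem_support (by simpa using h0)])
  conv_lhs => rw [← erase_add_single (i + 1) μ]
  simp only [evenWeight, map_add, weight_single, hi, Nat.even_add_one, not_true_eq_false,
    if_false, if_true, smul_eq_mul, mul_zero, mul_one, add_zero]
  omega

theorem mapDomain_identifyNext_of_eq_zero {i : ℕ} {ν : ℕ →₀ ℕ} (hν : ν (i + 1) = 0) :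
    ν.mapDomain (identifyNext i) = ν := by
  rw [mapDomain_identifyNext, hν, single_zero, add_zero,
    erase_of_notMem_support (notMem_support_iff.2 hν)]

theorem coeff_rename_skipTwo_eq_zero (p : MvPolynomial ℕ ℚ) {i : ℕ} {ν : ℕ →₀ ℕ} (hν : ν i ≠ 0) :
    coeff ν (rename (skipTwo i) p) = 0 := by
  refine coeff_rename_eq_zero _ _ _ fun μ hμ => absurd ?_ hν
  rw [← hμ]
  refine mapDomain_of_notMem_range _ _ ?_
  rintro ⟨k, hk⟩
  simp only [skipTwo] at hk
  split_ifs at hk <;> omega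

theorem SatisfiesEx.coeff_eq_zero_of_even {d : ℕ → MvPolynomial ℕ ℚ} (hE : SatisfiesEx d)
    {m i : ℕ} {e : ℕ →₀ ℕ} (hi : Even i) (him : i ≤ 2 * m) (hei : e i ≠ 0)
    (hsmall : ∀ μ, evenWeight μ < evenWeight e → coeff μ (d (m + 1)) = 0) :
    coeff e (d m) = 0 := by
  set e' := e.mapDomain (skipTwo (i + 1))
  have hnot : ∀ k, k = i + 1 ∨ k = i + 2 → e' k = 0 := by
    rintro k hk
    refine mapDomain_of_notMem_range _ _ ?_
    rintro ⟨l, hl⟩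
    simp only [skipTwo] at hl
    split_ifs at hl <;> omega
  have he'i : e' i = e i := by
    simpa [skipTwo] using mapDomain_apply (skipTwo_injective (i + 1)) e i
  calc coeff e (d m)
      = coeff e' (rename (skipTwo (i + 1)) (d m)) :=
        (coeff_rename_mapDomain _ (skipTwo_injective _) _ _).symm
    _ = coeff e' (rename (identifyNext (i + 1)) (d (m + 1))) := by rw [hE.rename_eq (by omega)]
    _ = coeff e' (d (m + 1)) :=
        coeff_rename_eq_of_fiber _ _ (mapDomain_identifyNext_of_eq_zero (hnot _ (.inr rfl)))
          fun μ hne hμ => absurd (eq_of_mapDomain_identifyNext_eq hμ (hnot _ (.inl rfl))) hne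
    _ = coeff e' (rename (identifyNext i) (d (m + 1))) :=
        (coeff_rename_eq_of_fiber _ _ (mapDomain_identifyNext_of_eq_zero (hnot _ (.inl rfl)))
          fun μ hne hμ => hsmall μ (evenWeight_mapDomain_skipTwo (i + 1) e ▸
            evenWeight_lt_of_mapDomain_identifyNext_eq hi hμ hne)).symm
    _ = coeff e' (rename (skipTwo i) (d m)) := by rw [hE.rename_eq (by omega)]
    _ = 0 := coeff_rename_skipTwo_eq_zero _ (by rwa [he'i])

end Uniqueness

section OddVariables

open Finsupp

theorem two_mul_add_one_injective : Function.Injective fun n : ℕ => 2 * n + 1 :=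
  fun a b h => by simp only at h; omega

theorem aeval_oddZero_eq_killCompl :
    aeval oddZero = killCompl (R := ℚ) two_mul_add_one_injective := by
  refine algHom_ext fun k => ?_
  rw [aeval_X, oddZero]
  rcases Nat.even_or_odd' k with ⟨j, rfl | rfl⟩
  · rw [if_pos (by omega), X, killCompl_monomial_eq_zero_of_notMem_range _ _ (a := 2 * j)
      (by simp) fun ⟨l, hl⟩ => by simp only at hl; omega]
  · rw [if_neg (by omega), show (2 * j + 1) / 2 = j by omega, ← rename_X (R := ℚ)
      (fun n : ℕ => 2 * n + 1) j, killCompl_rename_app]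

theorem coeff_eq_zero_of_aeval_oddZero_eq_zero {p : MvPolynomial ℕ ℚ} (hp : aeval oddZero p = 0)
    {e : ℕ →₀ ℕ} (he : ∀ k ∈ e.support, ¬Even k) : coeff e p = 0 := by
  have hrange : ↑e.support ⊆ Set.range fun n : ℕ => 2 * n + 1 := fun k hk => by
    obtain ⟨j, rfl⟩ := Nat.not_even_iff_odd.1 (he k hk)
    exact ⟨j, rfl⟩
  rw [← mapDomain_comapDomain _ two_mul_add_one_injective e hrange,
    ← coeff_killCompl two_mul_add_one_injective,
    ← aeval_oddZero_eq_killCompl, hp, coeff_zero]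

end OddVariables

theorem SatisfiesEx.eq_zero {d : ℕ → MvPolynomial ℕ ℚ} (hE : SatisfiesEx d)
    (hvars : ∀ m, (d m).vars ⊆ Finset.range (2 * m + 1)) (hodd : ∀ m, aeval oddZero (d m) = 0)
    (m : ℕ) : d m = 0 := by
  suffices h : ∀ n m (e : ℕ →₀ ℕ), evenWeight e = n → coeff e (d m) = 0 by
    ext e
    rw [coeff_zero]
    exact h _ m e rfl
  intro n
  induction n using Nat.strong_induction_on with
  | _ n ih =>
    rintro m e rfl
    by_contra hne
    have hsupp : ∀ k ∈ e.support, k < 2 * m + 1 := fun k hk => Finset.mem_range.1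
      (hvars m ((mem_vars_iff_mem_support k).2 ⟨e, mem_support_iff.2 hne, hk⟩))
    by_cases hev : ∃ i ∈ e.support, Even i
    · obtain ⟨i, hi, hie⟩ := hev
      exact hne (hE.coeff_eq_zero_of_even hie (by have := hsupp i hi; omega)
        (Finsupp.mem_support_iff.1 hi) fun μ hμ => ih _ hμ _ _ rfl)
    · simp only [not_exists, not_and] at hev
      exact hne (coeff_eq_zero_of_aeval_oddZero_eq_zero (hodd m) hev)

/-- For a finite ranked poset `P`, the family obtained from the
`N_P^(m)` by the substitution (⋆) is the unique stable x-family satisfying (E_x) whose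
evaluation at `(0,y₁,0,…,0,y_m,0)` equals `(-1)^{|V₀|} · F_P^(m)(y₁,…,y_m)` for all `m`. -/
theorem stmt11 (α : Type) [Fintype α] [PartialOrder α] (ht : α → ℕ) (hrk : IsRanked ht) :
    (IsStableX (fun m => aeval (pqToX m) (NP α ht m)) ∧
      SatisfiesEx (fun m => aeval (pqToX m) (NP α ht m)) ∧
      ∀ m, aeval oddZero (aeval (pqToX m) (NP α ht m)) =
        ((-1 : ℚ) ^ (Finset.univ.filter (fun v : α => Even (ht v))).card) • FP α ht m) ∧
    ∀ f : ℕ → MvPolynomial ℕ ℚ, IsStableX f → SatisfiesEx f →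
      (∀ m, aeval oddZero (f m) =
        ((-1 : ℚ) ^ (Finset.univ.filter (fun v : α => Even (ht v))).card) • FP α ht m) →
      ∀ m, f m = aeval (pqToX m) (NP α ht m) := by
  have hvars := vars_xFamily_subset α (ht := ht)
  have hE := satisfiesEx_xFamily α hrk
  refine ⟨⟨⟨hvars, aeval_truncate_xFamily α hrk⟩, hE, aeval_oddZero_xFamily α⟩,
    fun f hf hfE hfodd m => sub_eq_zero.1 ((hfE.sub hE).eq_zero (fun m => ?_) (fun m => ?_) m)⟩
  · exact Finset.Subset.trans (vars_sub_subset (f m)) (Finset.union_subset (hf.1 m) (hvars m))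
  · rw [Pi.sub_apply, map_sub, hfodd, aeval_oddZero_xFamily, sub_self]
end
end

section
/- Fix n ≥ 1 and an integer m ≥ n. The family (𝐍_{P_K}^(m)), where K ranges over all set compositions of {1,…,n}, is linearly independent over ℚ in the free ℚ-algebra on noncommuting generators b₁,…,b_{m+1},d₁,…,d_m. -/
open scoped Classical

noncomputable section

/-- The free `ℚ`-algebra on noncommuting generators `a₁, a₂, …` (generator `j` is `a_{j+1}`). -/
abbrev NC1 : Type := MonoidAlgebra ℚ (FreeMonoid ℕ)

/-- The free `ℚ`-algebra on two alphabets of noncommuting generators: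
`Sum.inl j` is `b_{j+1}` and `Sum.inr j` is `d_{j+1}`. -/
abbrev NC2 : Type := MonoidAlgebra ℚ (FreeMonoid (ℕ ⊕ ℕ))

/-- The order condition for `r : Fin n → Fin N` with respect to a partial order `le`
and rank function `ht` on `{1,…,n}` (represented as `Fin n`). -/
def NCOrderCond {n N : ℕ} (le : Fin n → Fin n → Prop) (ht : Fin n → ℕ)
    (r : Fin n → Fin N) : Prop :=
  (∀ x y, le x y → r x ≤ r y) ∧ ∀ x y, le x y → x ≠ y → Odd (ht x) → r x < r y

/-- `(le, ht)` is a labeled ranked poset structure on `Fin n`: `le` is a partial order,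
minimal elements have height `0`, and covering relations increase the height by one. -/
def IsLRPoset {n : ℕ} (le : Fin n → Fin n → Prop) (ht : Fin n → ℕ) : Prop :=
  (∀ x, le x x) ∧ (∀ x y z, le x y → le y z → le x z) ∧
    (∀ x y, le x y → le y x → x = y) ∧
    (∀ x, (∀ y, le y x → y = x) → ht x = 0) ∧
    ∀ x y, le x y → x ≠ y → (∀ z, le x z → le z y → z = x ∨ z = y) → ht y = ht x + 1

/-- The noncommutative generating function `𝐅_P^(N)` (generator `j` is `a_{j+1}`). -/
def ncF {n : ℕ} (le : Fin n → Fin n → Prop) (ht : Fin n → ℕ) (N : ℕ) : NC1 :=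
  ∑ r : Fin n → Fin N,
    if NCOrderCond le ht r then
      MonoidAlgebra.of ℚ (FreeMonoid ℕ) (FreeMonoid.ofList (List.ofFn fun i => (r i : ℕ)))
    else 0

/-- The noncommutative generating function `𝐍_P^(m)` in the two alphabets `b`, `d`. -/
def ncN {n : ℕ} (le : Fin n → Fin n → Prop) (ht : Fin n → ℕ) (m : ℕ) : NC2 :=
  ∑ r : Fin n → Fin (m + 1),
    if NCOrderCond le ht r ∧ ∀ i, Odd (ht i) → (r i : ℕ) < m then
      MonoidAlgebra.of ℚ (FreeMonoid (ℕ ⊕ ℕ)) (FreeMonoid.ofList (List.ofFn fun i =>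
        if Even (ht i) then (Sum.inl (r i : ℕ) : ℕ ⊕ ℕ) else Sum.inr (r i : ℕ)))
    else 0

/-- The generator `a_{j+1}` of `NC1`. -/
def genA (j : ℕ) : NC1 := MonoidAlgebra.of ℚ (FreeMonoid ℕ) (FreeMonoid.of j)

/-- The generator `b_{j+1}` (for `Sum.inl j`) or `d_{j+1}` (for `Sum.inr j`) of `NC2`. -/
def bd (s : ℕ ⊕ ℕ) : NC2 := MonoidAlgebra.of ℚ (FreeMonoid (ℕ ⊕ ℕ)) (FreeMonoid.of s)

/-- The `ℚ`-algebra homomorphism of `NC1` substituting `φ j` for the generator `a_{j+1}`. -/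
def ncSubst1 (φ : ℕ → NC1) : NC1 →ₐ[ℚ] NC1 :=
  MonoidAlgebra.lift ℚ NC1 (FreeMonoid ℕ) (FreeMonoid.lift φ)

/-- The `ℚ`-algebra homomorphism of `NC2` substituting `φ s` for the generator `bd s`. -/
def ncSubst2 (φ : ℕ ⊕ ℕ → NC2) : NC2 →ₐ[ℚ] NC2 :=
  MonoidAlgebra.lift ℚ NC2 (FreeMonoid (ℕ ⊕ ℕ)) (FreeMonoid.lift φ)

/-- A set composition `(K₀,…,K_{ℓ-1})` of `{1,…,n}`, encoded as a surjection
`Fin n → Fin ℓ` sending each element to the index of its block. -/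
abbrev SetComp (n : ℕ) : Type :=
  {c : Σ ℓ : Fin (n + 1), Fin n → Fin ℓ // Function.Surjective c.2}

instance (n : ℕ) : Fintype (SetComp n) := Fintype.ofFinite _

/-- The rank function of the labeled ranked poset `P_K`: `ht i = s` for `i ∈ K_s`. -/
def SetComp.ht {n : ℕ} (K : SetComp n) (i : Fin n) : ℕ := (K.1.2 i : ℕ)

/-- The partial order of the labeled ranked poset `P_K`:
`i ≤ j` iff `i = j` or `i` lies in an earlier block than `j`. -/
def SetComp.le {n : ℕ} (K : SetComp n) (x y : Fin n) : Prop := x = y ∨ K.1.2 x < K.1.2 y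

/-- The order of the disjoint union `P ⊕ Q` on `Fin (n + n')`. -/
def sumLe {n n' : ℕ} (leP : Fin n → Fin n → Prop) (leQ : Fin n' → Fin n' → Prop)
    (x y : Fin (n + n')) : Prop :=
  (∃ (hx : (x : ℕ) < n) (hy : (y : ℕ) < n), leP ⟨x, hx⟩ ⟨y, hy⟩) ∨
  (∃ (_ : n ≤ (x : ℕ)) (_ : n ≤ (y : ℕ)),
    leQ ⟨(x : ℕ) - n, by have := x.isLt; omega⟩ ⟨(y : ℕ) - n, by have := y.isLt; omega⟩)

/-- The rank function of the disjoint union `P ⊕ Q` on `Fin (n + n')`. -/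
def sumHt {n n' : ℕ} (htP : Fin n → ℕ) (htQ : Fin n' → ℕ) (x : Fin (n + n')) : ℕ :=
  if h : (x : ℕ) < n then htP ⟨x, h⟩ else htQ ⟨(x : ℕ) - n, by have := x.isLt; omega⟩


/-!
Write `h_K i` for the index of the block of `K` containing `i`, and `w_K` for the word whose
`i`-th letter is `b_{h_K i}` or `d_{h_K i}` according to the parity of `h_K i`. Since `m ≥ n`,
`r = h_K` is admissible for `P_K`, so `w_K` occurs in `𝐍_{P_K}^(m)`. Conversely, if `w_K` occurs
in `𝐍_{P_{K'}}^(m)`, via `r`, then `r = h_K` and `h_K ≡ h_{K'}` mod 2. The order condition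
makes `h_K` weakly increasing along `h_{K'}`, strictly so across odd levels; parity upgrades this
to strict increase everywhere, and since both take all values of an initial segment of `ℕ`,
`h_K = h_{K'}`. So `w_K` has coefficient `δ_{K K'}` in `𝐍_{P_{K'}}^(m)`, and the family is
independent.
-/

def ncWord {n : ℕ} (ht r : Fin n → ℕ) : FreeMonoid (ℕ ⊕ ℕ) :=
  FreeMonoid.ofList (List.ofFn fun i => if Even (ht i) then Sum.inl (r i) else Sum.inr (r i))

theorem eq_and_even_iff_of_ncWord_eq {n : ℕ} {ht ht' r r' : Fin n → ℕ}
    (h : ncWord ht r = ncWord ht' r') :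
    r = r' ∧ ∀ i, (Even (ht i) ↔ Even (ht' i)) := by
  have hi := fun i => congrFun (List.ofFn_inj.mp (FreeMonoid.ofList.injective h)) i
  refine ⟨funext fun i => ?_, fun i => ?_⟩ <;>
    · have := hi i
      split_ifs at this <;> simp_all [-Nat.not_even_iff_odd]

open Finset in
theorem coord_ncN {n : ℕ} (le : Fin n → Fin n → Prop) (ht : Fin n → ℕ) (m : ℕ)
    (w : FreeMonoid (ℕ ⊕ ℕ)) :
    (MonoidAlgebra.basis _ ℚ).coord w (ncN le ht m) =
      #{r : Fin n → Fin (m + 1) |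
        (NCOrderCond le ht r ∧ ∀ i, Odd (ht i) → (r i : ℕ) < m) ∧
          ncWord ht (fun i => r i) = w} := by
  simp only [ncN, ncWord, map_sum, apply_ite, map_zero, MonoidAlgebra.of_apply,
    ← MonoidAlgebra.basis_apply, Module.Basis.coord_apply, Module.Basis.repr_self,
    Finsupp.single_apply]
  rw [← Finset.sum_filter, Finset.sum_boole, Finset.filter_filter]

section ParityRanks

variable {α : Type*} {f g : α → ℕ}

theorem lt_of_lt_of_parity_eq (hg : ∀ x, ∀ a < g x, ∃ z, g z = a)
    (hpar : ∀ x, f x % 2 = g x % 2) (hle : ∀ x y, g x < g y → f x ≤ f y)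
    (hodd : ∀ x y, g x < g y → Odd (g x) → f x < f y) {x y : α} (hxy : g x < g y) :
    f x < f y := by
  rcases Nat.even_or_odd (g x) with hev | hod
  -- `g x` even: across one level, parity gives `f x ≠ f y`;
  -- across more, pass through the odd level `g x + 1`.
  · rcases (Nat.succ_le_of_lt hxy).eq_or_lt with hsucc | hlt
    · have := hle x y hxy
      have := hpar x
      have := hpar y
      rw [Nat.even_iff] at hev
      omega
    · obtain ⟨z, hz⟩ := hg y (g x + 1) hlt
      calc f x ≤ f z := hle x z (by omega)
        _ < f y := hodd z y (by omega) (hz ▸ hev.add_one)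
  · exact hodd x y hxy hod

theorem eq_of_lt_imp_lt_of_parity_eq (hf : ∀ x, ∀ a < f x, ∃ z, f z = a)
    (hg : ∀ x, ∀ a < g x, ∃ z, g z = a) (hpar : ∀ x, f x % 2 = g x % 2)
    (hlt : ∀ x y, g x < g y → f x < f y) : f = g := by
  have hge : ∀ k x, g x = k → k ≤ f x := by
    intro k
    induction k with
    | zero => simp
    | succ k ih =>
      intro x hx
      obtain ⟨z, hz⟩ := hg x k (by omega)
      have := hlt z x (by omega)
      have := ih z hz
      omega
  have hle : ∀ k x, f x = k → k ≤ g x := by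
    intro k
    induction k with
    | zero => simp
    | succ k ih =>
      intro x hx
      obtain ⟨z, hz⟩ := hf x k (by omega)
      have hzx : g z ≤ g x := not_lt.mp fun h => by have := hlt x z h; omega
      have hne : g z ≠ g x := fun h => by have := hpar z; have := hpar x; omega
      have := ih z hz
      omega
  funext x
  exact le_antisymm (hle _ x rfl) (hge _ x rfl)

end ParityRanks

namespace SetComp

variable {n m : ℕ}

theorem ht_lt_length (K : SetComp n) (x : Fin n) : K.ht x < K.1.1 := (K.1.2 x).isLt

theorem ht_lt (K : SetComp n) (x : Fin n) : K.ht x < n :=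
  (K.ht_lt_length x).trans_le (Nat.lt_succ_iff.mp K.1.1.isLt)

theorem exists_ht_eq (K : SetComp n) {a : ℕ} (ha : a < K.1.1) : ∃ x, K.ht x = a := by
  obtain ⟨x, hx⟩ := K.2 ⟨a, ha⟩
  exact ⟨x, congrArg Fin.val hx⟩

theorem length_le_of_ht_eq {K K' : SetComp n} (h : K.ht = K'.ht) : (K.1.1 : ℕ) ≤ K'.1.1 := by
  by_contra! hlt
  obtain ⟨x, hx⟩ := K.exists_ht_eq hlt
  have := K'.ht_lt_length x
  rw [← h] at this
  omega

theorem ht_injective : Function.Injective (SetComp.ht (n := n)) := by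
  rintro ⟨⟨ℓ, c⟩, hc⟩ ⟨⟨ℓ', c'⟩, hc'⟩ h
  obtain rfl : ℓ = ℓ' :=
    Fin.ext (le_antisymm (length_le_of_ht_eq h) (length_le_of_ht_eq h.symm))
  obtain rfl : c = c' := funext fun i => Fin.ext (congrFun h i)
  rfl


theorem eq_of_ncOrderCond {N : ℕ} {K K' : SetComp n} {r : Fin n → Fin N}
    (hr : NCOrderCond K'.le K'.ht r) (hrK : ∀ i, (r i : ℕ) = K.ht i)
    (hpar : ∀ i, Even (K.ht i) ↔ Even (K'.ht i)) : K' = K := by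
  have hle : ∀ x y, K'.ht x < K'.ht y → K.ht x ≤ K.ht y := fun x y h => by
    simpa only [Fin.le_def, hrK] using hr.1 x y (Or.inr h)
  have hodd : ∀ x y, K'.ht x < K'.ht y → Odd (K'.ht x) → K.ht x < K.ht y := fun x y h hx => by
    simpa only [Fin.lt_def, hrK] using hr.2 x y (Or.inr h) (fun hxy => (hxy ▸ h).false) hx
  have hmod : ∀ i, K.ht i % 2 = K'.ht i % 2 := fun i => by
    have := hpar i
    rw [Nat.even_iff, Nat.even_iff] at this
    omega
  refine ht_injective (eq_of_lt_imp_lt_of_parity_eq ?_ ?_ hmod ?_).symm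
  · exact fun x a ha => K.exists_ht_eq (ha.trans (K.ht_lt_length x))
  · exact fun x a ha => K'.exists_ht_eq (ha.trans (K'.ht_lt_length x))
  · exact fun x y => lt_of_lt_of_parity_eq
      (fun x a ha => K'.exists_ht_eq (ha.trans (K'.ht_lt_length x))) hmod hle hodd


def htFin (K : SetComp n) (hm : n ≤ m) (i : Fin n) : Fin (m + 1) :=
  ⟨K.ht i, by have := K.ht_lt i; omega⟩

theorem ncOrderCond_htFin (K : SetComp n) (hm : n ≤ m) : NCOrderCond K.le K.ht (K.htFin hm) := by
  constructor
  · rintro x y (rfl | h)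
    exacts [le_rfl, h.le]
  · rintro x y (rfl | h) hxy -
    exacts [(hxy rfl).elim, h]

theorem ncOrderCond_and_ncWord_eq_iff (hm : n ≤ m) (K K' : SetComp n)
    (r : Fin n → Fin (m + 1)) :
    ((NCOrderCond K'.le K'.ht r ∧ ∀ i, Odd (K'.ht i) → (r i : ℕ) < m) ∧
      ncWord K'.ht (fun i => r i) = ncWord K.ht K.ht) ↔ K' = K ∧ r = K.htFin hm := by
  constructor
  · rintro ⟨⟨hr, -⟩, hw⟩
    obtain ⟨hrK, hpar⟩ := eq_and_even_iff_of_ncWord_eq hw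
    have hK := eq_of_ncOrderCond hr (congrFun hrK) fun i => (hpar i).symm
    exact ⟨hK, funext fun i => Fin.ext (congrFun hrK i)⟩
  · rintro ⟨rfl, rfl⟩
    exact ⟨⟨K'.ncOrderCond_htFin hm, fun i _ => (K'.ht_lt i).trans_le hm⟩, rfl⟩

theorem coord_ncN_ncWord (hm : n ≤ m) (K K' : SetComp n) :
    (MonoidAlgebra.basis _ ℚ).coord (ncWord K.ht K.ht) (ncN K'.le K'.ht m) =
      if K = K' then 1 else 0 := by
  rw [coord_ncN]
  simp_rw [ncOrderCond_and_ncWord_eq_iff hm]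
  split_ifs with hK <;> simp [hK, eq_comm, Finset.filter_eq']

end SetComp

theorem stmt14_general (n m : ℕ) (hm : n ≤ m) :
    LinearIndependent ℚ (fun K : SetComp n => ncN K.le K.ht m) := by
  let coords : NC2 →ₗ[ℚ] SetComp n → ℚ :=
    LinearMap.pi fun K => (MonoidAlgebra.basis _ ℚ).coord (ncWord K.ht K.ht)
  refine LinearIndependent.of_comp coords ?_
  convert (Pi.basisFun ℚ (SetComp n)).linearIndependent with K'
  ext K
  simp [coords, SetComp.coord_ncN_ncWord hm, Pi.single_apply]

/-- Fix `n ≥ 1` and `m ≥ n`.  The family `(𝐍_{P_K}^(m))`, where `K`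
ranges over the set compositions of `{1,…,n}`, is linearly independent over `ℚ`. -/
theorem stmt14 (n m : ℕ) (hn : 1 ≤ n) (hm : n ≤ m) :
    LinearIndependent ℚ (fun K : SetComp n => ncN K.le K.ht m) :=
  stmt14_general n m hm
end
end

section
/- Let P be a labeled ranked poset on n elements. There exists a family (c_K) of nonnegative integers indexed by the set compositions K of {1,…,n} such that 𝐅_P^(N) = Σ_K c_K 𝐅_{P_K}^(N) in the free ℚ-algebra on a₁,…,a_N, for every N ≥ 1. -/
/-!
Sort the elements by the key `2 * r x + ht x % 2`, i.e. by `r`, with even heights before odd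
heights inside each level set of `r`. If the blocks of `K` alternate in the parity of the heights,
starting with an even block, then `r` is compatible with `P_K` exactly when the block index is
monotone in this key; as no block is empty, the blocks are then forced to be the maximal runs of
constant parity in the sorted order. Conversely, if `r` satisfies the order condition of `P`, the
least key is even (it is attained at a minimal element), and the run decomposition separates any
`x < y` of `P`, because an element covering `x` below `y` has the other parity and lies between
them in key order. So each `r` counted by `𝐅_P` is counted by exactly one such `K` that is also
strictly increasing along `P`, and `𝐅_P` is the sum of the corresponding `𝐅_{P_K}`.
-/

open scoped Classical

noncomputable section

section RunLabelling

variable {α : Type*} (key : α → ℕ)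

/-- `κ` numbers the maximal runs of constant parity of `key` on `S`, in increasing key order. -/
def IsRunLabelling (S : Finset α) (κ : α → ℕ) (ℓ : ℕ) : Prop :=
  (∀ x ∈ S, κ x % 2 = key x % 2) ∧ (∀ x ∈ S, ∀ y ∈ S, key x ≤ key y → κ x ≤ κ y) ∧
    S.image κ = Finset.range ℓ

variable {key} {S : Finset α} {κ : α → ℕ} {ℓ : ℕ}

namespace IsRunLabelling

lemma lt_of_mem (h : IsRunLabelling key S κ ℓ) {x : α} (hx : x ∈ S) : κ x < ℓ :=
  Finset.mem_range.mp (h.2.2 ▸ Finset.mem_image_of_mem κ hx)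

lemma exists_eq (h : IsRunLabelling key S κ ℓ) {t : ℕ} (ht : t < ℓ) : ∃ z ∈ S, κ z = t :=
  Finset.mem_image.mp (h.2.2 ▸ Finset.mem_range.mpr ht)

lemma eq_zero_of_forall_key_le (h : IsRunLabelling key S κ ℓ) {x : α} (hx : x ∈ S)
    (hmin : ∀ z ∈ S, key x ≤ key z) : κ x = 0 := by
  obtain ⟨z, hz, hz0⟩ := h.exists_eq (Nat.zero_lt_of_lt (h.lt_of_mem hx))
  simpa [hz0] using h.2.1 x hx z hz (hmin z hz)

/-- Every label below `ℓ` is used, so passing to the next key value raises the label by at most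
one; parity decides whether it does. -/
lemma eq_add_of_pred (h : IsRunLabelling key S κ ℓ) {x y : α} (hx : x ∈ S) (hy : y ∈ S)
    (hyx : key y < key x) (hpred : ∀ z ∈ S, key z < key x → key z ≤ key y) :
    κ x = κ y + (key x + key y) % 2 := by
  have hle := h.2.1 y hy x hx hyx.le
  have hnext : κ x ≤ κ y + 1 := by
    by_contra! hgt
    obtain ⟨z, hz, hzy⟩ := h.exists_eq (show κ y + 1 < ℓ by have := h.lt_of_mem hx; omega)
    have hzx : key z < key x := by
      by_contra! hxz
      have := h.2.1 x hx z hz hxz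
      omega
    have := h.2.1 z hz y hy (hpred z hz hzx)
    omega
  have := h.1 x hx
  have := h.1 y hy
  omega

lemma eq_of_isRunLabelling {κ' : α → ℕ} {ℓ' : ℕ} (h : IsRunLabelling key S κ ℓ)
    (h' : IsRunLabelling key S κ' ℓ') : ∀ x ∈ S, κ x = κ' x := by
  intro x hx
  induction hk : key x using Nat.strong_induction_on generalizing x with
  | _ k ih =>
    subst hk
    by_cases hbelow : (S.filter (key · < key x)).Nonempty
    · obtain ⟨y, hyS, hmax⟩ := (S.filter (key · < key x)).exists_max_image key hbelow
      rw [Finset.mem_filter] at hyS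
      have hpred : ∀ z ∈ S, key z < key x → key z ≤ key y :=
        fun z hz hzx => hmax z (Finset.mem_filter.mpr ⟨hz, hzx⟩)
      rw [h.eq_add_of_pred hx hyS.1 hyS.2 hpred, h'.eq_add_of_pred hx hyS.1 hyS.2 hpred,
        ih _ hyS.2 y hyS.1 rfl]
    · have hmin : ∀ z ∈ S, key x ≤ key z := fun z hz => by
        by_contra! hzx
        exact hbelow ⟨z, Finset.mem_filter.mpr ⟨hz, hzx⟩⟩
      rw [h.eq_zero_of_forall_key_le hx hmin, h'.eq_zero_of_forall_key_le hx hmin]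

end IsRunLabelling

lemma exists_isRunLabelling [DecidableEq α] (S : Finset α)
    (hmin : ∀ x ∈ S, (∀ y ∈ S, key x ≤ key y) → key x % 2 = 0) :
    ∃ κ ℓ, IsRunLabelling key S κ ℓ := by
  induction S using Finset.induction_on_max_value key with
  | empty => exact ⟨fun _ => 0, 0, by simp [IsRunLabelling]⟩
  | insert a s has hmax ih =>
    have hmin_s : ∀ x ∈ s, (∀ y ∈ s, key x ≤ key y) → key x % 2 = 0 := fun x hx hx_min =>
      hmin x (Finset.mem_insert_of_mem hx) (by
        simpa [Finset.forall_mem_insert, hmax x hx] using hx_min)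
    obtain ⟨κ, ℓ, hκ⟩ := ih hmin_s
    rcases s.eq_empty_or_nonempty with rfl | hs
    · refine ⟨fun _ => 0, 1, ?_, by simp, by simp⟩
      simpa [eq_comm] using hmin a (by simp) (by simp)
    have hℓ : 0 < ℓ := Nat.zero_lt_of_lt (hκ.lt_of_mem hs.choose_spec)
    obtain ⟨w, hw, hwtop⟩ := hκ.exists_eq (t := ℓ - 1) (by omega)
    set t := (ℓ - 1) + (key a + (ℓ - 1)) % 2
    have htop : ∀ y ∈ s, key a ≤ key y → κ y = t := by
      intro y hy hay
      have := hκ.2.1 w hw y hy ((hmax w hw).trans hay)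
      have := hκ.lt_of_mem hy
      have := hκ.1 y hy
      have := hmax y hy
      omega
    have hupd : ∀ y ∈ s, Function.update κ a t y = κ y := fun y hy =>
      Function.update_of_ne (ne_of_mem_of_not_mem hy has) _ _
    refine ⟨Function.update κ a t, t + 1, ?_, ?_, ?_⟩
    · simp only [Finset.forall_mem_insert, Function.update_self]
      exact ⟨by omega, fun y hy => (hupd y hy).symm ▸ hκ.1 y hy⟩
    · simp only [Finset.forall_mem_insert, Function.update_self]
      refine ⟨⟨fun _ => le_rfl, fun y hy hay => (hupd y hy ▸ htop y hy hay).ge⟩,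
        fun x hx => ⟨?_, ?_⟩⟩
      · have := hκ.lt_of_mem hx
        simp only [hupd x hx]
        omega
      · intro y hy hxy
        simpa only [hupd x hx, hupd y hy] using hκ.2.1 x hx y hy hxy
    · rw [Finset.image_insert, Function.update_self, Finset.image_congr hupd, hκ.2.2]
      ext u
      simp only [Finset.mem_insert, Finset.mem_range]
      omega

end RunLabelling

namespace IsLRPoset

variable {n : ℕ} {le : Fin n → Fin n → Prop} {ht : Fin n → ℕ}

lemma wellFounded_lt (hP : IsLRPoset le ht) : WellFounded fun x y => le x y ∧ x ≠ y :=
  @Finite.wellFounded_of_trans_of_irrefl _ _ _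
    ⟨fun x y z hxy hyz => ⟨hP.2.1 x y z hxy.1 hyz.1, fun hxz =>
      hxy.2 (hP.2.2.1 x y hxy.1 (hxz ▸ hyz.1))⟩⟩
    ⟨fun _ h => h.2 rfl⟩

lemma exists_le_ht_eq_zero (hP : IsLRPoset le ht) (x : Fin n) : ∃ m, le m x ∧ ht m = 0 := by
  obtain ⟨m, hmx, hmin⟩ := hP.wellFounded_lt.has_min {y | le y x} ⟨x, hP.1 x⟩
  refine ⟨m, hmx, hP.2.2.2.1 m fun y hym => ?_⟩
  by_contra hne
  exact hmin y (hP.2.1 y m x hym hmx) ⟨hym, hne⟩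

lemma exists_le_ht_eq_succ (hP : IsLRPoset le ht) {x y : Fin n} (hxy : le x y) (hne : x ≠ y) :
    ∃ z, le x z ∧ le z y ∧ ht z = ht x + 1 := by
  obtain ⟨z, ⟨hxz, hzy⟩, hmin⟩ :=
    hP.wellFounded_lt.has_min {z | (le x z ∧ x ≠ z) ∧ le z y} ⟨y, ⟨hxy, hne⟩, hP.1 y⟩
  refine ⟨z, hxz.1, hzy, hP.2.2.2.2 x z hxz.1 hxz.2 fun w hxw hwz => ?_⟩
  by_contra! hw
  exact hmin w ⟨⟨hxw, hw.1.symm⟩, hP.2.1 w z y hwz hzy⟩ ⟨hwz, hw.2⟩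

end IsLRPoset

namespace SetComp

variable {n N : ℕ}

lemma image_ht (K : SetComp n) : Finset.univ.image K.ht = Finset.range K.1.1 := by
  ext t
  simp only [Finset.mem_image, Finset.mem_univ, true_and, Finset.mem_range, SetComp.ht]
  refine ⟨fun ⟨x, hx⟩ => hx ▸ (K.1.2 x).isLt, fun ht => ?_⟩
  obtain ⟨x, hx⟩ := K.2 ⟨t, ht⟩
  exact ⟨x, congrArg Fin.val hx⟩

lemma ext_ht {K K' : SetComp n} (h : K.ht = K'.ht) : K = K' := by
  have hℓ : K.1.1 = K'.1.1 := Fin.ext <| by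
    rw [← Finset.card_range K.1.1, ← image_ht, h, image_ht, Finset.card_range]
  obtain ⟨⟨ℓ, f⟩, hf⟩ := K
  obtain ⟨⟨ℓ', f'⟩, hf'⟩ := K'
  obtain rfl : ℓ = ℓ' := hℓ
  obtain rfl : f = f' := funext fun x => Fin.ext (congrFun h x)
  rfl

lemma exists_ht_eq_s17 (κ : Fin n → ℕ) {ℓ : ℕ} (h : Finset.univ.image κ = Finset.range ℓ) :
    ∃ K : SetComp n, K.ht = κ := by
  have hℓ : ℓ < n + 1 := by
    have := Finset.card_image_le (s := Finset.univ) (f := κ)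
    rw [h, Finset.card_range, Finset.card_univ, Fintype.card_fin] at this
    omega
  have hκ : ∀ x, κ x < ℓ := fun x =>
    Finset.mem_range.mp (h ▸ Finset.mem_image_of_mem κ (Finset.mem_univ x))
  refine ⟨⟨⟨⟨ℓ, hℓ⟩, fun x => ⟨κ x, hκ x⟩⟩, fun t => ?_⟩, rfl⟩
  obtain ⟨x, -, hx⟩ := Finset.mem_image.mp (h ▸ Finset.mem_range.mpr t.isLt)
  exact ⟨x, Fin.ext hx⟩

lemma ncOrderCond_iff (K : SetComp n) (r : Fin n → Fin N) :
    NCOrderCond K.le K.ht r ↔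
      ∀ x y, K.ht x < K.ht y → r x ≤ r y ∧ (Odd (K.ht x) → r x < r y) := by
  refine ⟨fun hr x y hxy => ⟨hr.1 x y (Or.inr hxy), hr.2 x y (Or.inr hxy) ?_⟩, fun h => ⟨?_, ?_⟩⟩
  · rintro rfl
    exact lt_irrefl _ hxy
  · rintro x y (rfl | hxy)
    exacts [le_rfl, (h x y hxy).1]
  · rintro x y (rfl | hxy) hne
    exacts [absurd rfl hne, (h x y hxy).2]

end SetComp

section OrderKey

variable {n N : ℕ} {le : Fin n → Fin n → Prop} {ht : Fin n → ℕ} {r : Fin n → Fin N}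

def orderKey (ht : Fin n → ℕ) (r : Fin n → Fin N) (x : Fin n) : ℕ := 2 * r x + ht x % 2

lemma orderKey_mod_two (x : Fin n) : orderKey ht r x % 2 = ht x % 2 := by
  simp [orderKey, Nat.add_mod]

lemma orderKey_le_of_le (hr : NCOrderCond le ht r) {x y : Fin n} (hxy : le x y) :
    orderKey ht r x ≤ orderKey ht r y := by
  rcases eq_or_ne x y with rfl | hne
  · exact le_rfl
  have hle : (r x : ℕ) ≤ r y := hr.1 x y hxy
  have hlt : ht x % 2 = 1 → (r x : ℕ) < r y := fun hodd =>
    hr.2 x y hxy hne (Nat.odd_iff.mpr hodd)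
  unfold orderKey
  omega

lemma orderKey_mod_two_eq_zero_of_forall_le (hP : IsLRPoset le ht) (hr : NCOrderCond le ht r)
    {x : Fin n} (hmin : ∀ y, orderKey ht r x ≤ orderKey ht r y) : orderKey ht r x % 2 = 0 := by
  obtain ⟨m, hmx, hm⟩ := hP.exists_le_ht_eq_zero x
  have := orderKey_le_of_le hr hmx
  have := hmin m
  simp only [orderKey, hm] at *
  omega

lemma SetComp.ncOrderCond_iff_isRunLabelling {K : SetComp n}
    (hpar : ∀ x, K.ht x % 2 = ht x % 2) :
    NCOrderCond K.le K.ht r ↔ IsRunLabelling (orderKey ht r) Finset.univ K.ht K.1.1 := by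
  simp only [IsRunLabelling, Finset.mem_univ, forall_const, hpar, orderKey_mod_two, K.image_ht,
    and_true, implies_true, true_and, K.ncOrderCond_iff, Nat.odd_iff]
  unfold orderKey
  constructor
  · intro h x y hxy
    by_contra! hyx
    have hy := h y x hyx
    have := hpar x
    have := hpar y
    by_cases hodd : K.ht y % 2 = 1
    · have := hy.2 (by omega)
      omega
    obtain ⟨z, hz⟩ := K.2 ⟨K.ht y + 1, by have := (K.1.2 x).isLt; unfold SetComp.ht at *; omega⟩
    have hz : K.ht z = K.ht y + 1 := congrArg Fin.val hz
    have := hpar z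
    have := (h y z (by omega)).1
    have := (h z x (by omega)).2 (by omega)
    omega
  · intro h x y hxy
    have hyx := mt (h y x) (not_le.mpr hxy)
    have := hpar x
    constructor <;> omega

end OrderKey

namespace SetComp

variable {n N : ℕ} {le : Fin n → Fin n → Prop} {ht : Fin n → ℕ} {r : Fin n → Fin N}

def IsAdmissible (le : Fin n → Fin n → Prop) (ht : Fin n → ℕ) (K : SetComp n) : Prop :=
  (∀ x, K.ht x % 2 = ht x % 2) ∧ ∀ x y, le x y → x ≠ y → K.ht x < K.ht y

lemma IsAdmissible.ncOrderCond {K : SetComp n} (hK : K.IsAdmissible le ht)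
    (hr : NCOrderCond K.le K.ht r) : NCOrderCond le ht r := by
  rw [ncOrderCond_iff] at hr
  refine ⟨fun x y hxy => ?_, fun x y hxy hne hodd => ?_⟩
  · rcases eq_or_ne x y with rfl | hne
    exacts [le_rfl, (hr x y (hK.2 x y hxy hne)).1]
  · refine (hr x y (hK.2 x y hxy hne)).2 ?_
    rw [Nat.odd_iff, hK.1 x]
    exact Nat.odd_iff.mp hodd

lemma exists_isAdmissible (hP : IsLRPoset le ht) (hr : NCOrderCond le ht r) :
    ∃ K : SetComp n, K.IsAdmissible le ht ∧ NCOrderCond K.le K.ht r := by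
  obtain ⟨κ, ℓ, hκ⟩ := exists_isRunLabelling (key := orderKey ht r) Finset.univ
    fun x _ hmin => orderKey_mod_two_eq_zero_of_forall_le hP hr fun y => hmin y (by simp)
  obtain ⟨K, rfl⟩ := exists_ht_eq_s17 κ hκ.2.2
  have hpar : ∀ x, K.ht x % 2 = ht x % 2 := fun x => by
    rw [hκ.1 x (Finset.mem_univ x), orderKey_mod_two]
  have hmono : ∀ x y, orderKey ht r x ≤ orderKey ht r y → K.ht x ≤ K.ht y :=
    fun x y => hκ.2.1 x (Finset.mem_univ x) y (Finset.mem_univ y)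
  refine ⟨K, ⟨hpar, fun x y hxy hne => ?_⟩, (ncOrderCond_iff_isRunLabelling hpar).mpr ?_⟩
  · obtain ⟨z, hxz, hzy, hz⟩ := hP.exists_le_ht_eq_succ hxy hne
    have := hmono x z (orderKey_le_of_le hr hxz)
    have := hmono z y (orderKey_le_of_le hr hzy)
    have := hpar x
    have := hpar z
    omega
  · exact ⟨hκ.1, hκ.2.1, K.image_ht⟩

lemma IsAdmissible.eq {K K' : SetComp n} (hK : K.IsAdmissible le ht)
    (hK' : K'.IsAdmissible le ht) (hr : NCOrderCond K.le K.ht r)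
    (hr' : NCOrderCond K'.le K'.ht r) : K = K' := by
  rw [ncOrderCond_iff_isRunLabelling hK.1] at hr
  rw [ncOrderCond_iff_isRunLabelling hK'.1] at hr'
  exact ext_ht (funext fun x => hr.eq_of_isRunLabelling hr' x (Finset.mem_univ x))

lemma sum_ite_isAdmissible {M : Type*} [AddCommMonoid M] (hP : IsLRPoset le ht) (m : M) :
    ∑ K : SetComp n, (if K.IsAdmissible le ht ∧ NCOrderCond K.le K.ht r then m else 0) =
      if NCOrderCond le ht r then m else 0 := by
  split_ifs with hr
  · obtain ⟨K, hK, hKr⟩ := exists_isAdmissible hP hr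
    rw [Finset.sum_eq_single K (fun K' _ hne => if_neg fun h => hne (h.1.eq hK h.2 hKr))
      (by simp), if_pos ⟨hK, hKr⟩]
  · exact Finset.sum_eq_zero fun K _ => if_neg fun h => hr (h.1.ncOrderCond h.2)

end SetComp

/-- For any labeled ranked poset `P` on `n` elements, `𝐅_P` is a linear
combination with nonnegative integer coefficients of the `𝐅_{P_K}`, `K` ranging over the
set compositions of `{1,…,n}`. -/
theorem stmt17 (n : ℕ) (le : Fin n → Fin n → Prop) (ht : Fin n → ℕ)
    (hP : IsLRPoset le ht) :
    ∃ c : SetComp n → ℕ, ∀ N : ℕ, 1 ≤ N →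
      ncF le ht N = ∑ K : SetComp n, (c K : ℚ) • ncF K.le K.ht N := by
  refine ⟨fun K => if K.IsAdmissible le ht then 1 else 0, fun N _ => ?_⟩
  simp only [ncF, Finset.smul_sum]
  rw [Finset.sum_comm]
  refine Finset.sum_congr rfl fun r _ => ?_
  rw [← SetComp.sum_ite_isAdmissible hP]
  refine Finset.sum_congr rfl fun K _ => ?_
  by_cases hK : K.IsAdmissible le ht <;> simp [hK]
end
end
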